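/- Suppose X_t and X̂_t solve dX_t = s(X_t)dt + √2 dW_t and dX̂_t = ŝ(X̂_t)dt + √2 dW_t with the same Brownian motion, where s = −∇U with U m-strongly convex and sup_x‖ŝ(x) − s(x)‖ ≤ ε. Then the difference Z_t = X̂_t − X_t satisfies the pathwise bound ‖Z_t‖² ≤ e^{−mt}‖Z_0‖² + (ε²/m²)(1 − e^{−mt}) almost surely; in particular, if X_0 ∼ μ and X̂_0 ∼ μ̂ with both laws invariant, then W₂(μ̂, μ) ≤ ε/m. -/

import Mathlib

/-! Under the synchronous coupling the Brownian terms cancel, so `Z = X̂ - X` solves an ODE.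
Strong convexity makes `s = -∇U` strongly monotone, and together with Young's inequality this
gives `d‖Z‖²/dt ≤ -m‖Z‖² + ε²/m`, whence the pathwise bound by Grönwall. The law of
`(X̂_t, X_t)` couples `μ̂` with `μ`, so `W₂²(μ̂, μ) ≤ e^{-mt} E‖Z_0‖² + ε²/m²` for every `t`;
letting `t → ∞` gives `W₂(μ̂, μ) ≤ ε/m`. -/

open MeasureTheory RealInnerProductSpace NNReal

noncomputable def W2sq {d : ℕ}
    (μ ν : Measure (EuclideanSpace ℝ (Fin d))) : ENNReal :=
  ⨅ (π : Measure (EuclideanSpace ℝ (Fin d) × EuclideanSpace ℝ (Fin d)))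
    (_ : π.map Prod.fst = μ ∧ π.map Prod.snd = ν),
      ∫⁻ p, ENNReal.ofReal (‖p.1 - p.2‖ ^ 2) ∂π

noncomputable def W2 {d : ℕ}
    (μ ν : Measure (EuclideanSpace ℝ (Fin d))) : ℝ :=
  Real.sqrt (W2sq μ ν).toReal

section Pathwise

variable {E : Type*} [NormedAddCommGroup E] [InnerProductSpace ℝ E]

theorem inner_sub_le_neg_mul_sq_of_firstOrder_strongConvex {U : E → ℝ} {G : E → E} {m : ℝ}
    (hconv : ∀ x y, U y ≥ U x + ⟪G x, y - x⟫ + m / 2 * ‖y - x‖ ^ 2) (x y : E) :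
    ⟪y - x, (-G y) - (-G x)⟫ ≤ -m * ‖y - x‖ ^ 2 := by
  have hxy := hconv x y
  have hyx := hconv y x
  rw [norm_sub_rev, ← neg_sub y x, inner_neg_right] at hyx
  rw [neg_sub_neg, inner_sub_right, real_inner_comm (G x), real_inner_comm (G y)]
  linarith

theorem two_inner_add_le_of_dissipative {z a e : E} {m ε : ℝ} (hm : 0 < m)
    (ha : ⟪z, a⟫ ≤ -m * ‖z‖ ^ 2) (he : ‖e‖ ≤ ε) :
    2 * ⟪z, e + a⟫ ≤ -m * ‖z‖ ^ 2 + ε ^ 2 / m := by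
  have he' : ⟪z, e⟫ ≤ ‖z‖ * ε :=
    (real_inner_le_norm z e).trans (mul_le_mul_of_nonneg_left he (norm_nonneg z))
  have young : 2 * (‖z‖ * ε) ≤ m * ‖z‖ ^ 2 + ε ^ 2 / m := by
    have hsq : m * ‖z‖ ^ 2 + ε ^ 2 / m - 2 * (‖z‖ * ε) = (m * ‖z‖ - ε) ^ 2 / m := by
      field_simp
      ring
    have : 0 ≤ (m * ‖z‖ - ε) ^ 2 / m := by positivity
    linarith
  rw [inner_add_right]
  linarith

theorem le_exp_mul_add_of_hasDerivAt_le {g g' : ℝ → ℝ} {m b t : ℝ} (hm : m ≠ 0)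
    (hg : ∀ u, 0 ≤ u → HasDerivAt g (g' u) u) (hg' : ∀ u, 0 ≤ u → g' u ≤ -m * g u + b)
    (ht : 0 ≤ t) :
    g t ≤ Real.exp (-m * t) * g 0 + b / m * (1 - Real.exp (-m * t)) := by
  have hgronwall := le_gronwallBound_of_liminf_deriv_right_le (f := g) (f' := g')
    (δ := g 0) (K := -m) (ε := b) (a := 0) (b := t)
    (fun u hu => (hg u hu.1).continuousAt.continuousWithinAt)
    (fun u hu _ hr => (hg u hu.1).hasDerivWithinAt.liminf_right_slope_le hr)
    le_rfl (fun u hu => hg' u hu.1) t ⟨ht, le_rfl⟩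
  rw [gronwallBound_of_K_ne_0 (neg_ne_zero.2 hm), sub_zero] at hgronwall
  convert hgronwall using 1
  rw [div_neg]
  ring

theorem sq_norm_le_of_hasDerivAt_dissipative {Z F : ℝ → E} {m c t : ℝ} (hm : m ≠ 0)
    (hZ : ∀ u, 0 ≤ u → HasDerivAt Z (F u) u)
    (hF : ∀ u, 0 ≤ u → 2 * ⟪Z u, F u⟫ ≤ -m * ‖Z u‖ ^ 2 + c) (ht : 0 ≤ t) :
    ‖Z t‖ ^ 2 ≤ Real.exp (-m * t) * ‖Z 0‖ ^ 2 + c / m * (1 - Real.exp (-m * t)) :=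
  le_exp_mul_add_of_hasDerivAt_le hm (fun u hu => (hZ u hu).norm_sq) hF ht

end Pathwise

theorem le_of_forall_le_ofReal_exp_mul_add {W C D : ENNReal} {m : ℝ} (hm : 0 < m)
    (hC : C ≠ ⊤) (hW : ∀ t : ℝ, 0 ≤ t → W ≤ ENNReal.ofReal (Real.exp (-m * t)) * C + D) :
    W ≤ D := by
  have hexp : Filter.Tendsto (fun t : ℝ => ENNReal.ofReal (Real.exp (-m * t)))
      Filter.atTop (nhds 0) := by
    rw [← ENNReal.ofReal_zero]
    exact ENNReal.tendsto_ofReal <| Real.tendsto_exp_atBot.comp <|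
      Filter.tendsto_id.const_mul_atTop_of_neg (neg_lt_zero.2 hm)
  have hlim : Filter.Tendsto (fun t : ℝ => ENNReal.ofReal (Real.exp (-m * t)) * C + D)
      Filter.atTop (nhds D) := by
    simpa using (ENNReal.Tendsto.mul_const hexp (Or.inr hC)).add_const D
  exact ge_of_tendsto hlim (Filter.eventually_atTop.2 ⟨0, hW⟩)

section Wasserstein

variable {d : ℕ} {Ω : Type*} [MeasurableSpace Ω] {ℙ : Measure Ω}

theorem W2sq_le_lintegral_of_map {Y Y' : Ω → EuclideanSpace ℝ (Fin d)}
    {μ ν : Measure (EuclideanSpace ℝ (Fin d))} (hY : AEMeasurable Y ℙ) (hY' : AEMeasurable Y' ℙ)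
    (hμ : ℙ.map Y = μ) (hν : ℙ.map Y' = ν) :
    W2sq μ ν ≤ ∫⁻ ω, ENNReal.ofReal (‖Y ω - Y' ω‖ ^ 2) ∂ℙ := by
  have hpair : AEMeasurable (fun ω => (Y ω, Y' ω)) ℙ := hY.prodMk hY'
  have hcoupling : (ℙ.map fun ω => (Y ω, Y' ω)).map Prod.fst = μ ∧
      (ℙ.map fun ω => (Y ω, Y' ω)).map Prod.snd = ν := by
    rw [AEMeasurable.map_map_of_aemeasurable measurable_fst.aemeasurable hpair,
      AEMeasurable.map_map_of_aemeasurable measurable_snd.aemeasurable hpair]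
    exact ⟨hμ, hν⟩
  calc W2sq μ ν
      ≤ ∫⁻ p, ENNReal.ofReal (‖p.1 - p.2‖ ^ 2) ∂(ℙ.map fun ω => (Y ω, Y' ω)) :=
        iInf₂_le (ℙ.map fun ω => (Y ω, Y' ω)) hcoupling
    _ = ∫⁻ ω, ENNReal.ofReal (‖Y ω - Y' ω‖ ^ 2) ∂ℙ := lintegral_map' (by fun_prop) hpair

theorem ofReal_sq_norm_sub_le {E : Type*} [SeminormedAddCommGroup E] (a b : E) :
    ENNReal.ofReal (‖a - b‖ ^ 2) ≤
      2 * ENNReal.ofReal (‖a‖ ^ 2) + 2 * ENNReal.ofReal (‖b‖ ^ 2) := by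
  have hle : ‖a - b‖ ^ 2 ≤ 2 * ‖a‖ ^ 2 + 2 * ‖b‖ ^ 2 := by
    nlinarith [norm_sub_le a b, norm_nonneg (a - b), sq_nonneg (‖a‖ - ‖b‖)]
  calc ENNReal.ofReal (‖a - b‖ ^ 2) ≤ ENNReal.ofReal (2 * ‖a‖ ^ 2 + 2 * ‖b‖ ^ 2) :=
        ENNReal.ofReal_le_ofReal hle
    _ = 2 * ENNReal.ofReal (‖a‖ ^ 2) + 2 * ENNReal.ofReal (‖b‖ ^ 2) := by
        rw [ENNReal.ofReal_add (by positivity) (by positivity), ENNReal.ofReal_mul zero_le_two,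
          ENNReal.ofReal_mul zero_le_two, ENNReal.ofReal_ofNat]

theorem lintegral_sq_norm_sub_lt_top_of_map {E : Type*} [NormedAddCommGroup E]
    [MeasurableSpace E] [OpensMeasurableSpace E] {Y Y' : Ω → E}
    (hY : AEMeasurable Y ℙ) (hY' : AEMeasurable Y' ℙ)
    (hYmom : ∫⁻ x, ENNReal.ofReal (‖x‖ ^ 2) ∂(ℙ.map Y) < ⊤)
    (hY'mom : ∫⁻ x, ENNReal.ofReal (‖x‖ ^ 2) ∂(ℙ.map Y') < ⊤) :
    ∫⁻ ω, ENNReal.ofReal (‖Y ω - Y' ω‖ ^ 2) ∂ℙ < ⊤ := by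
  rw [lintegral_map' (by fun_prop) hY] at hYmom
  rw [lintegral_map' (by fun_prop) hY'] at hY'mom
  calc ∫⁻ ω, ENNReal.ofReal (‖Y ω - Y' ω‖ ^ 2) ∂ℙ
      ≤ ∫⁻ ω, (2 * ENNReal.ofReal (‖Y ω‖ ^ 2) + 2 * ENNReal.ofReal (‖Y' ω‖ ^ 2)) ∂ℙ :=
        lintegral_mono fun ω => ofReal_sq_norm_sub_le (Y ω) (Y' ω)
    _ = 2 * ∫⁻ ω, ENNReal.ofReal (‖Y ω‖ ^ 2) ∂ℙ + 2 * ∫⁻ ω, ENNReal.ofReal (‖Y' ω‖ ^ 2) ∂ℙ := by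
        rw [lintegral_add_left' (by fun_prop), lintegral_const_mul' _ _ ENNReal.ofNat_ne_top,
          lintegral_const_mul' _ _ ENNReal.ofNat_ne_top]
    _ < ⊤ := by finiteness

theorem lintegral_ofReal_le_of_le_mul_add [IsProbabilityMeasure ℙ] {f g : Ω → ℝ} {a b : ℝ}
    (ha : 0 ≤ a) (hfg : ∀ ω, f ω ≤ a * g ω + b) :
    ∫⁻ ω, ENNReal.ofReal (f ω) ∂ℙ ≤
      ENNReal.ofReal a * ∫⁻ ω, ENNReal.ofReal (g ω) ∂ℙ + ENNReal.ofReal b := by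
  calc ∫⁻ ω, ENNReal.ofReal (f ω) ∂ℙ
      ≤ ∫⁻ ω, (ENNReal.ofReal a * ENNReal.ofReal (g ω) + ENNReal.ofReal b) ∂ℙ :=
        lintegral_mono fun ω => (ENNReal.ofReal_le_ofReal (hfg ω)).trans <|
          ENNReal.ofReal_add_le.trans_eq (by rw [ENNReal.ofReal_mul ha])
    _ = ENNReal.ofReal a * ∫⁻ ω, ENNReal.ofReal (g ω) ∂ℙ + ENNReal.ofReal b := by
        rw [lintegral_add_right _ measurable_const,
          lintegral_const_mul' _ _ ENNReal.ofReal_ne_top, lintegral_const, measure_univ, mul_one]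

theorem W2_le_of_W2sq_le_ofReal_sq {μ ν : Measure (EuclideanSpace ℝ (Fin d))} {r : ℝ}
    (hr : 0 ≤ r) (h : W2sq μ ν ≤ ENNReal.ofReal (r ^ 2)) : W2 μ ν ≤ r :=
  (Real.sqrt_le_sqrt (ENNReal.toReal_le_of_le_ofReal (sq_nonneg r) h)).trans_eq (Real.sqrt_sq hr)

end Wasserstein

theorem score_perturbation_stability_general {d : ℕ} {Ω : Type*}
    [MeasurableSpace Ω] (ℙ : Measure Ω) [IsProbabilityMeasure ℙ]
    (U : EuclideanSpace ℝ (Fin d) → ℝ) (m ε : ℝ) (hm : 0 < m)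
    (hconv : ∀ x y : EuclideanSpace ℝ (Fin d),
      U y ≥ U x + ⟪gradient U x, y - x⟫ + m / 2 * ‖y - x‖ ^ 2)
    (s shat : EuclideanSpace ℝ (Fin d) → EuclideanSpace ℝ (Fin d))
    (hs : ∀ x, s x = -gradient U x)
    (hclose : ∀ x, ‖shat x - s x‖ ≤ ε)
    (X Xhat : ℝ → Ω → EuclideanSpace ℝ (Fin d))
    (hXmeas : ∀ t : ℝ, AEMeasurable (X t) ℙ)
    (hXhatmeas : ∀ t : ℝ, AEMeasurable (Xhat t) ℙ)
    -- synchronous coupling: the Brownian increments cancel in the difference,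
    -- which therefore satisfies the pathwise ODE `Ż_t = ŝ(X̂_t) - s(X_t)`
    (hZ : ∀ ω : Ω, ∀ t : ℝ, 0 ≤ t →
      HasDerivAt (fun u : ℝ => Xhat u ω - X u ω)
        (shat (Xhat t ω) - s (X t ω)) t) :
    (∀ ω : Ω, ∀ t : ℝ, 0 ≤ t →
      ‖Xhat t ω - X t ω‖ ^ 2 ≤
        Real.exp (-m * t) * ‖Xhat 0 ω - X 0 ω‖ ^ 2 +
          ε ^ 2 / m ^ 2 * (1 - Real.exp (-m * t))) ∧
    (∀ μ μhat : Measure (EuclideanSpace ℝ (Fin d)),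
      IsProbabilityMeasure μ → IsProbabilityMeasure μhat →
      (∫⁻ x, ENNReal.ofReal (‖x‖ ^ 2) ∂μ) < ⊤ →
      (∫⁻ x, ENNReal.ofReal (‖x‖ ^ 2) ∂μhat) < ⊤ →
      (∀ t : ℝ, 0 ≤ t → ℙ.map (X t) = μ) →
      (∀ t : ℝ, 0 ≤ t → ℙ.map (Xhat t) = μhat) →
      W2 μhat μ ≤ ε / m) := by
  have hs_dissipative : ∀ x y, ⟪y - x, s y - s x⟫ ≤ -m * ‖y - x‖ ^ 2 := by
    simpa only [hs] using inner_sub_le_neg_mul_sq_of_firstOrder_strongConvex hconv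
  have hpath : ∀ ω t, 0 ≤ t → ‖Xhat t ω - X t ω‖ ^ 2 ≤
      Real.exp (-m * t) * ‖Xhat 0 ω - X 0 ω‖ ^ 2 + ε ^ 2 / m ^ 2 * (1 - Real.exp (-m * t)) := by
    intro ω t ht
    rw [sq m, ← div_div]
    refine sq_norm_le_of_hasDerivAt_dissipative hm.ne' (hZ ω) (fun u _ => ?_) ht
    have h := two_inner_add_le_of_dissipative hm (hs_dissipative (X u ω) (Xhat u ω))
      (hclose (Xhat u ω))
    rwa [sub_add_sub_cancel] at h
  refine ⟨hpath, fun μ μhat _ _ hμ hμhat hX hXhat => ?_⟩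
  have hε : 0 ≤ ε := (norm_nonneg _).trans (hclose 0)
  have hZ₀ : ∫⁻ ω, ENNReal.ofReal (‖Xhat 0 ω - X 0 ω‖ ^ 2) ∂ℙ < ⊤ :=
    lintegral_sq_norm_sub_lt_top_of_map (hXhatmeas 0) (hXmeas 0)
      (by rwa [hXhat 0 le_rfl]) (by rwa [hX 0 le_rfl])
  refine W2_le_of_W2sq_le_ofReal_sq (by positivity) ?_
  rw [div_pow]
  refine le_of_forall_le_ofReal_exp_mul_add hm hZ₀.ne fun t ht => ?_
  calc W2sq μhat μ ≤ ∫⁻ ω, ENNReal.ofReal (‖Xhat t ω - X t ω‖ ^ 2) ∂ℙ :=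
        W2sq_le_lintegral_of_map (hXhatmeas t) (hXmeas t) (hXhat t ht) (hX t ht)
    _ ≤ _ := lintegral_ofReal_le_of_le_mul_add (Real.exp_pos _).le fun ω =>
        (hpath ω t ht).trans <| add_le_add_right (mul_le_of_le_one_right (by positivity)
          (sub_le_self _ (Real.exp_pos _).le)) _

/-- Stability under score perturbation: with synchronous coupling (the Brownian
terms cancel, so the difference path solves a pathwise ODE), the difference
`Z_t = X̂_t - X_t` satisfies
`‖Z_t‖² ≤ e^{-mt}‖Z_0‖² + (ε²/m²)(1 - e^{-mt})`; moreover if `X_t ∼ μ` and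
`X̂_t ∼ μ̂` for all `t ≥ 0` (both laws invariant, in `P₂`), then
`W₂(μ̂, μ) ≤ ε/m`. -/
theorem score_perturbation_stability {d : ℕ} {Ω : Type*}
    [MeasurableSpace Ω] (ℙ : Measure Ω) [IsProbabilityMeasure ℙ]
    (U : EuclideanSpace ℝ (Fin d) → ℝ) (m ε : ℝ) (hm : 0 < m) (hε : 0 < ε)
    (hU : ContDiff ℝ 2 U)
    (hconv : ∀ x y : EuclideanSpace ℝ (Fin d),
      U y ≥ U x + ⟪gradient U x, y - x⟫ + m / 2 * ‖y - x‖ ^ 2)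
    (s shat : EuclideanSpace ℝ (Fin d) → EuclideanSpace ℝ (Fin d))
    (hs : ∀ x, s x = -gradient U x)
    (L L' : ℝ≥0) (hsLip : LipschitzWith L s) (hshatLip : LipschitzWith L' shat)
    (hclose : ∀ x, ‖shat x - s x‖ ≤ ε)
    (X Xhat : ℝ → Ω → EuclideanSpace ℝ (Fin d))
    (hXmeas : ∀ t : ℝ, AEMeasurable (X t) ℙ)
    (hXhatmeas : ∀ t : ℝ, AEMeasurable (Xhat t) ℙ)
    -- synchronous coupling: the Brownian increments cancel in the difference,
    -- which therefore satisfies the pathwise ODE `Ż_t = ŝ(X̂_t) - s(X_t)`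
    (hZ : ∀ ω : Ω, ∀ t : ℝ, 0 ≤ t →
      HasDerivAt (fun u : ℝ => Xhat u ω - X u ω)
        (shat (Xhat t ω) - s (X t ω)) t) :
    (∀ ω : Ω, ∀ t : ℝ, 0 ≤ t →
      ‖Xhat t ω - X t ω‖ ^ 2 ≤
        Real.exp (-m * t) * ‖Xhat 0 ω - X 0 ω‖ ^ 2 +
          ε ^ 2 / m ^ 2 * (1 - Real.exp (-m * t))) ∧
    (∀ μ μhat : Measure (EuclideanSpace ℝ (Fin d)),
      IsProbabilityMeasure μ → IsProbabilityMeasure μhat →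
      (∫⁻ x, ENNReal.ofReal (‖x‖ ^ 2) ∂μ) < ⊤ →
      (∫⁻ x, ENNReal.ofReal (‖x‖ ^ 2) ∂μhat) < ⊤ →
      (∀ t : ℝ, 0 ≤ t → ℙ.map (X t) = μ) →
      (∀ t : ℝ, 0 ≤ t → ℙ.map (Xhat t) = μhat) →
      W2 μhat μ ≤ ε / m) :=
  score_perturbation_stability_general ℙ U m ε hm hconv s shat hs hclose X Xhat hXmeas hXhatmeas hZ
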